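/- Fix k ≥ 1 and let y_k be the k×k diagonal matrix with diagonal entries 0, 1/k, …, (k−1)/k, and let z_k = exp(2πi y_k) be the diagonal unitary whose diagonal entries are the k-th roots of unity. Then for every ε > 0 and every k×k unitary u with |u y_k − y_k u|_2 < ε², one has ‖u‖ ≤ 2 and |u z_k − z_k u|_2 < 7ε². That is, 𝓘(y_k, y_k, ε²) ⊂ Σ(z_k, z_k, 7ε²), where 𝓘(y_k, y_k, δ) = {u ∈ U_k : |u y_k − y_k u|_2 < δ} and Σ(z_k, z_k, δ) = {a ∈ M_k(ℂ) : ‖a‖ ≤ 2, |a z_k − z_k a|_2 < δ}. -/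

import Mathlib

/-!
The commutator of `u` with a diagonal matrix `diag d` has entries `u i j * (d j - d i)`.
Since `z_k = f(y_k)` for the `2π`-Lipschitz function `f t = exp (2π i t)`, the commutator
`[u, z_k]` is entrywise dominated by `2π` times `[u, y_k]`, whence
`|[u, z_k]|₂ ≤ 2π |[u, y_k]|₂ < 2π ε² ≤ 7 ε²`.
-/

open Matrix Filter MeasureTheory
open scoped Matrix ENNReal

noncomputable section

instance (k : ℕ) : MeasurableSpace (Matrix (Fin k) (Fin k) ℂ) :=
  inferInstanceAs (MeasurableSpace ((Fin k) → (Fin k) → ℂ))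

/-- the normalized Hilbert–Schmidt norm `|A|₂ = (tr_k(A* A))^(1/2)` -/
def hsNorm (k : ℕ) (A : Matrix (Fin k) (Fin k) ℂ) : ℝ :=
  Real.sqrt (((Aᴴ * A).trace).re / k)

/-- the operator norm of a `k × k` complex matrix (acting on `ℓ²(Fin k)`) -/
def matOpNorm {k : ℕ} (A : Matrix (Fin k) (Fin k) ℂ) : ℝ :=
  ‖Matrix.toEuclideanCLM (𝕜 := ℂ) A‖

/-- covering number of `S` by open `ε`-balls in the normalized Hilbert–Schmidt norm -/
def covHS (k : ℕ) (S : Set (Matrix (Fin k) (Fin k) ℂ)) (ε : ℝ) : ℝ≥0∞ :=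
  sInf ((fun t : Finset (Matrix (Fin k) (Fin k) ℂ) => (t.card : ℝ≥0∞)) ''
    {t | S ⊆ ⋃ c ∈ t, {x | hsNorm k (x - c) < ε}})

/-- covering number of `S` by open `ε`-balls in the operator norm -/
def covOp (k : ℕ) (S : Set (Matrix (Fin k) (Fin k) ℂ)) (ε : ℝ) : ℝ≥0∞ :=
  sInf ((fun t : Finset (Matrix (Fin k) (Fin k) ℂ) => (t.card : ℝ≥0∞)) ''
    {t | S ⊆ ⋃ c ∈ t, {x | matOpNorm (x - c) < ε}})

/-- `y_k`: the diagonal `k × k` matrix with entries `0, 1/k, …, (k-1)/k`. -/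
def yMat (k : ℕ) : Matrix (Fin k) (Fin k) ℂ :=
  Matrix.diagonal fun i => (((i : ℕ) : ℂ) / k)

/-- the free entropy `χ(y)` of a selfadjoint element whose distribution is Lebesgue measure
on `[0,1]`: `∫₀¹∫₀¹ log |s-t| ds dt + 3/4 + (1/2) log (2π)` -/
def chiUnif : ℝ :=
  (∫ s in (0:ℝ)..1, ∫ t in (0:ℝ)..1, Real.log |s - t|) + 3/4 + (1/2) * Real.log (2 * Real.pi)

/-- `z_k = e^{2πi y_k}`, the diagonal unitary whose entries are the `k`-th roots of unity. -/
def zMat (k : ℕ) : Matrix (Fin k) (Fin k) ℂ :=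
  NormedSpace.exp ((((2 * Real.pi : ℝ) : ℂ) * Complex.I) • yMat k)

open Real

theorem CStarRing.norm_le_one_of_mem_unitary {E : Type*} [NormedRing E] [StarRing E]
    [CStarRing E] {U : E} (hU : U ∈ unitary E) : ‖U‖ ≤ 1 := by
  rcases subsingleton_or_nontrivial E with _ | _
  · simp [Subsingleton.elim U 0]
  · exact (CStarRing.norm_of_mem_unitary hU).le

theorem matOpNorm_le_one_of_mem_unitaryGroup {k : ℕ} {u : Matrix (Fin k) (Fin k) ℂ}
    (hu : u ∈ unitaryGroup (Fin k) ℂ) : matOpNorm u ≤ 1 :=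
  CStarRing.norm_le_one_of_mem_unitary (Unitary.map_mem toEuclideanCLM hu)

theorem Matrix.re_trace_conjTranspose_mul_self {m n : Type*} [Fintype m] [Fintype n]
    (A : Matrix m n ℂ) : ((Aᴴ * A).trace).re = ∑ j, ∑ i, ‖A i j‖ ^ 2 := by
  simp [trace, mul_apply, Complex.re_sum, ← Complex.normSq_eq_norm_sq, Complex.normSq_apply]

theorem hsNorm_le_mul_of_norm_apply_le {k : ℕ} {A B : Matrix (Fin k) (Fin k) ℂ} {c : ℝ}
    (hc : 0 ≤ c) (h : ∀ i j, ‖B i j‖ ≤ c * ‖A i j‖) : hsNorm k B ≤ c * hsNorm k A := by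
  rw [hsNorm, hsNorm, re_trace_conjTranspose_mul_self, re_trace_conjTranspose_mul_self,
    ← sqrt_sq hc, ← sqrt_mul (sq_nonneg c), mul_div_assoc', Finset.mul_sum]
  refine sqrt_le_sqrt (div_le_div_of_nonneg_right (Finset.sum_le_sum fun j _ => ?_) k.cast_nonneg)
  rw [Finset.mul_sum]
  refine Finset.sum_le_sum fun i _ => ?_
  rw [← mul_pow]
  exact pow_le_pow_left₀ (norm_nonneg _) (h i j) 2

theorem Matrix.commutator_diagonal_apply {n R : Type*} [Fintype n] [DecidableEq n] [CommRing R]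
    (u : Matrix n n R) (d : n → R) (i j : n) :
    (u * diagonal d - diagonal d * u) i j = u i j * (d j - d i) := by
  simp only [sub_apply, mul_diagonal, diagonal_mul]
  ring

theorem LipschitzWith.hsNorm_commutator_diagonal_le {f : ℝ → ℂ} {K : NNReal}
    (hf : LipschitzWith K f) {k : ℕ} (u : Matrix (Fin k) (Fin k) ℂ) (d : Fin k → ℝ) :
    hsNorm k (u * diagonal (fun i => f (d i)) - diagonal (fun i => f (d i)) * u)
      ≤ K * hsNorm k (u * diagonal (fun i => (d i : ℂ)) - diagonal (fun i => (d i : ℂ)) * u) := by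
  refine hsNorm_le_mul_of_norm_apply_le K.coe_nonneg fun i j => ?_
  rw [commutator_diagonal_apply, commutator_diagonal_apply, norm_mul, norm_mul,
    ← Complex.ofReal_sub, Complex.norm_real, ← dist_eq_norm, ← dist_eq_norm, mul_left_comm]
  exact mul_le_mul_of_nonneg_left (hf.dist_le_mul _ _) (norm_nonneg _)

theorem lipschitzWith_exp_two_pi_mul_I :
    LipschitzWith (2 * NNReal.pi) fun t : ℝ => Complex.exp ((2 * π * t : ℝ) * Complex.I) := by
  have h := (lipschitzWith_circleMap 0 1).comp (lipschitzWith_smul (2 * π))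
  rw [show nnabs 1 * ‖2 * π‖₊ = 2 * NNReal.pi by ext; simp [abs_of_pos pi_pos]] at h
  simpa [Function.comp_def, circleMap] using h

theorem yMat_eq_diagonal (k : ℕ) :
    yMat k = diagonal fun i : Fin k => (((i : ℕ) / k : ℝ) : ℂ) := by
  simp [yMat]

theorem zMat_eq_diagonal (k : ℕ) :
    zMat k =
      diagonal fun i : Fin k => Complex.exp ((2 * π * ((i : ℕ) / k : ℝ) : ℝ) * Complex.I) := by
  rw [zMat, yMat, ← diagonal_smul, exp_diagonal]
  congr 1
  ext i
  simp [← Complex.exp_eq_exp_ℂ]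
  ring_nf

theorem intertwining_subset_general
    (k : ℕ) (ε : ℝ)
    (u : Matrix (Fin k) (Fin k) ℂ) (hu : u ∈ Matrix.unitaryGroup (Fin k) ℂ)
    (hcomm : hsNorm k (u * yMat k - yMat k * u) < ε ^ 2) :
    matOpNorm u ≤ 2 ∧ hsNorm k (u * zMat k - zMat k * u) < 7 * ε ^ 2 := by
  refine ⟨(matOpNorm_le_one_of_mem_unitaryGroup hu).trans one_le_two, ?_⟩
  have hz := lipschitzWith_exp_two_pi_mul_I.hsNorm_commutator_diagonal_le u
    fun i : Fin k => ((i : ℕ) / k : ℝ)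
  rw [← yMat_eq_diagonal, ← zMat_eq_diagonal] at hz
  calc hsNorm k (u * zMat k - zMat k * u) ≤ 2 * π * hsNorm k (u * yMat k - yMat k * u) := by
        simpa using hz
    _ < 2 * π * ε ^ 2 := by gcongr
    _ ≤ 7 * ε ^ 2 := by gcongr; linarith [pi_lt_d2]

/-- The intertwining inclusion `𝓘(y_k, y_k, ε²) ⊆ Σ(z_k, z_k, 7ε²)`: a unitary almost
commuting with `y_k` almost commutes with `z_k`. -/
theorem intertwining_subset
    (k : ℕ) (hk : 1 ≤ k) (ε : ℝ) (hε : 0 < ε)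
    (u : Matrix (Fin k) (Fin k) ℂ) (hu : u ∈ Matrix.unitaryGroup (Fin k) ℂ)
    (hcomm : hsNorm k (u * yMat k - yMat k * u) < ε ^ 2) :
    matOpNorm u ≤ 2 ∧ hsNorm k (u * zMat k - zMat k * u) < 7 * ε ^ 2 :=
  intertwining_subset_general k ε u hu hcomm
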